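/- Let a, c_1, ..., c_n > 0 and σ ∈ S_n, and define the linear map Θ on n×n complex matrices by Θ(X) = diag(a x_{11} + c_1 x_{σ(1)σ(1)}, ..., a x_{nn} + c_n x_{σ(n)σ(n)}) - X. If a ≥ max(n - 1, n - (c_1···c_n)^(1/n)), then Θ is positive, i.e., it maps positive semidefinite matrices to positive semidefinite matrices. -/

import Mathlib

/-!
A positive semidefinite `X` is a sum of rank-one matrices `b bᴴ` and `Θ` is additive, so it
suffices to treat `X = b bᴴ`. Then `Θ(X) = D - b bᴴ` with `D = diag(a |bᵢ|² + cᵢ |b_{σ i}|²)`,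
and by Cauchy–Schwarz `D - b bᴴ ⪰ 0` as soon as `∑ |bᵢ|² / dᵢ ≤ 1`. If some `bᵢ` vanishes this
follows from `a ≥ n - 1`; otherwise, with `wᵢ = cᵢ |b_{σ i}|² / |bᵢ|²` (so `∏ wᵢ = ∏ cᵢ`), it
reads `∑ 1 / (a + wᵢ) ≤ 1`. Putting `δᵢ = wᵢ / (a + wᵢ)` and `Δ = ∑ δᵢ`, this reduces to
`∏ δᵢ / (1 - δᵢ) ≤ (Δ / (n - Δ))ⁿ` for `Δ < 1`, which comes from the weighted AM–GM inequality
applied to `1 - δᵢ = (1 - Δ) + ∑_{j ≠ i} δⱼ`, with weights chosen so that the product over `i`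
of the resulting bounds is `(∏ δᵢ) ((n - Δ) / Δ)ⁿ`.
-/

open Finset Matrix
open scoped ComplexOrder

/-- The map `Θ^{(n,σ)}[a; c₁,…,c_n]` on `n × n` complex matrices. -/
def ThetaMap (n : ℕ) (σ : Equiv.Perm (Fin n)) (a : ℝ) (c : Fin n → ℝ)
    (X : Matrix (Fin n) (Fin n) ℂ) : Matrix (Fin n) (Fin n) ℂ :=
  Matrix.diagonal (fun i => (a : ℂ) * X i i + (c i : ℂ) * X (σ i) (σ i)) - X

@[to_additive]
theorem Fintype.prod_ite_eq_mul_pow {ι M : Type*} [Fintype ι] [DecidableEq ι] [CommMonoid M]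
    (j : ι) (a b : M) : ∏ i, (if j = i then a else b) = a * b ^ (Fintype.card ι - 1) := by
  simp [prod_ite, filter_eq, filter_ne, card_erase_of_mem]

theorem Real.prod_le_pow_sum_div_card {ι : Type*} [Fintype ι] {z : ι → ℝ} (hz : ∀ i, 0 ≤ z i) :
    ∏ i, z i ≤ ((∑ i, z i) / Fintype.card ι) ^ Fintype.card ι := by
  rcases isEmpty_or_nonempty ι with _ | _
  · simp
  have hn : (0 : ℝ) < Fintype.card ι := by exact_mod_cast Fintype.card_pos
  have hprod : 0 ≤ ∏ i, z i := prod_nonneg fun i _ => hz i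
  have hamgm := Real.geom_mean_le_arith_mean_weighted univ (fun _ => 1 / (Fintype.card ι : ℝ))
    z (fun _ _ => by positivity) (by simp [hn.ne']) (fun i _ => hz i)
  rw [Real.finsetProd_rpow _ _ (fun i _ => hz i), ← mul_sum, one_div_mul_eq_div] at hamgm
  calc ∏ i, z i = ((∏ i, z i) ^ (1 / (Fintype.card ι : ℝ))) ^ Fintype.card ι := by
        rw [← Real.rpow_mul_natCast hprod, one_div_mul_cancel hn.ne', Real.rpow_one]
    _ ≤ _ := pow_le_pow_left₀ (Real.rpow_nonneg hprod _) hamgm _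

theorem Real.le_rpow_mul_rpow_one_sub {x y θ : ℝ} (hx : 0 ≤ x) (hxy : x ≤ y) (hθ : 0 ≤ θ) :
    x ≤ y ^ θ * x ^ (1 - θ) :=
  calc x = x ^ θ * x ^ (1 - θ) := by
        rw [← Real.rpow_add' hx (by simp), add_sub_cancel, Real.rpow_one]
    _ ≤ y ^ θ * x ^ (1 - θ) := by gcongr

theorem Real.prod_ite_rpow_le {ι : Type*} [Fintype ι] [DecidableEq ι] {θ e m : ℝ} {y : ι → ℝ}
    (hθ : 0 ≤ θ) (he : 0 ≤ e) (hθe : θ + (Fintype.card ι - 1) * e = 1) (hm : 0 ≤ m)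
    (hy : ∀ j, 0 ≤ y j) (i : ι) :
    ∏ j, (if j = i then m ^ θ else y j ^ e) ≤ θ * m + e * (∑ j, y j - y i) := by
  have hcard : ((Fintype.card ι - 1 : ℕ) : ℝ) = Fintype.card ι - 1 := by
    rw [Nat.cast_sub (Fintype.card_pos_iff.mpr ⟨i⟩), Nat.cast_one]
  have hamgm := Real.geom_mean_le_arith_mean_weighted univ (fun j => if i = j then θ else e)
    (fun j => if i = j then m else y j) (fun j _ => by split_ifs <;> assumption)
    (by rw [Fintype.sum_ite_eq_add_nsmul, nsmul_eq_mul, hcard]; exact hθe)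
    (fun j _ => by split_ifs <;> simp only [hm, hy])
  convert hamgm using 1
  · exact prod_congr rfl fun j _ => by rcases eq_or_ne j i with rfl | hji <;> simp [*, Ne.symm]
  · symm
    rw [← add_sum_erase _ _ (mem_univ i), if_pos rfl, if_pos rfl,
      sum_congr rfl fun j hj => by
        rw [if_neg (ne_of_mem_erase hj).symm, if_neg (ne_of_mem_erase hj).symm],
      ← mul_sum, sum_erase_eq_sub (mem_univ i)]

theorem prod_mul_pow_le_pow_mul_prod_one_sub {ι : Type*} [Fintype ι] {δ : ι → ℝ}
    (hδ : ∀ i, 0 ≤ δ i) (hpos : 0 < ∑ i, δ i) (hlt : ∑ i, δ i < 1) :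
    (∏ i, δ i) * (Fintype.card ι - ∑ i, δ i) ^ Fintype.card ι ≤
      (∑ i, δ i) ^ Fintype.card ι * ∏ i, (1 - δ i) := by
  classical
  set n := Fintype.card ι
  set Δ := ∑ i, δ i
  obtain ⟨i₀, -, -⟩ := exists_ne_zero_of_sum_ne_zero hpos.ne'
  have : Nonempty ι := ⟨i₀⟩
  have hn : (1 : ℝ) ≤ n := by exact_mod_cast Fintype.card_pos
  have hcard : ((Fintype.card ι - 1 : ℕ) : ℝ) = n - 1 := by
    rw [Nat.cast_sub Fintype.card_pos, Nat.cast_one]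
  set s := n - Δ
  have hs : 0 < s := by linarith
  -- chosen so that `θ * m = 1 - Δ`, `e * y j = δ j` and `θ + (n - 1) * e = 1`
  set θ := n * (1 - Δ) / s
  set e := Δ / s
  set m := s / n
  set y : ι → ℝ := fun j => s / Δ * δ j
  have hθ : 0 ≤ θ := by positivity
  have hy : ∀ j, 0 ≤ y j := fun j => mul_nonneg (by positivity) (hδ j)
  have hm : 0 ≤ m := by positivity
  have hsum_y : ∑ j, y j = s := by simp only [y, ← mul_sum]; exact div_mul_cancel₀ s hpos.ne'
  have hlocal : ∀ i, ∏ j, (if j = i then m ^ θ else y j ^ e) ≤ 1 - δ i := fun i => by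
    convert Real.prod_ite_rpow_le (e := e) hθ (by positivity)
      (by simp only [θ, e]; field_simp; ring) hm hy i
    simp only [θ, e, m, y, hsum_y]
    field_simp
    ring
  have hprod :
      ∏ i, ∏ j, (if j = i then m ^ θ else y j ^ e) = (m ^ n) ^ θ * (∏ j, y j) ^ (1 - θ) := by
    rw [prod_comm]
    simp only [Fintype.prod_ite_eq_mul_pow, prod_mul_distrib, prod_const, card_univ]
    simp_rw [← Real.rpow_mul_natCast (hy _), ← Real.rpow_mul_natCast hm,
      ← Real.rpow_natCast_mul hm, hcard]
    rw [Real.finsetProd_rpow univ y (fun j _ => hy j), mul_comm θ]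
    congr 2
    simp only [θ, e]; field_simp; ring
  have hY : ∏ j, y j ≤ ∏ i, (1 - δ i) := calc
    ∏ j, y j ≤ (m ^ n) ^ θ * (∏ j, y j) ^ (1 - θ) :=
      Real.le_rpow_mul_rpow_one_sub (prod_nonneg fun j _ => hy j)
        (by simpa only [hsum_y] using Real.prod_le_pow_sum_div_card hy) hθ
    _ = ∏ i, ∏ j, (if j = i then m ^ θ else y j ^ e) := hprod.symm
    _ ≤ ∏ i, (1 - δ i) := prod_le_prod (fun i _ => prod_nonneg fun j _ => by
        split_ifs <;> positivity [hy j]) fun i _ => hlocal i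
  calc (∏ i, δ i) * s ^ n = Δ ^ n * ∏ j, y j := by
        simp only [y, prod_mul_distrib, prod_const, card_univ, div_pow]
        field_simp
        ring
    _ ≤ Δ ^ n * ∏ i, (1 - δ i) := mul_le_mul_of_nonneg_left hY (by positivity)

theorem add_rpow_mul_sum_inv_add_le {ι : Type*} [Fintype ι] [Nonempty ι] {a : ℝ} {w : ι → ℝ}
    (ha : 0 < a) (hw : ∀ i, 0 < w i) (hS : (Fintype.card ι : ℝ) - 1 < a * ∑ i, (a + w i)⁻¹) :
    (a + (∏ i, w i) ^ ((1 : ℝ) / Fintype.card ι)) * ∑ i, (a + w i)⁻¹ ≤ Fintype.card ι := by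
  set n := Fintype.card ι
  set S := ∑ i, (a + w i)⁻¹
  set g := (∏ i, w i) ^ ((1 : ℝ) / n)
  have haw : ∀ i, 0 < a + w i := fun i => by linarith [hw i]
  set δ : ι → ℝ := fun i => w i / (a + w i)
  have hδ : ∀ i, 0 < δ i := fun i => div_pos (hw i) (haw i)
  have hδ_eq : ∀ i, 1 - δ i = a * (a + w i)⁻¹ := fun i => by
    have := (haw i).ne'
    simp only [δ]; field_simp; ring
  have hΔ : ∑ i, δ i = n - a * S := by
    simp only [S, mul_sum, ← hδ_eq, sum_sub_distrib, sum_const, card_univ, nsmul_eq_mul, mul_one]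
    ring
  have hΔ₀ : 0 < ∑ i, δ i := sum_pos (fun i _ => hδ i) univ_nonempty
  have hcore := prod_mul_pow_le_pow_mul_prod_one_sub (fun i => (hδ i).le) hΔ₀ (by linarith)
  have hg : g ^ n = ∏ i, w i := by
    simp only [g]
    rw [one_div, Real.rpow_inv_natCast_pow (prod_nonneg fun i _ => (hw i).le) Fintype.card_ne_zero]
  have hprodδ : ∏ i, δ i = g ^ n * ∏ i, (a + w i)⁻¹ := by
    rw [hg]
    simp only [δ, div_eq_mul_inv, prod_mul_distrib]
  rw [prod_congr rfl fun i _ => hδ_eq i, prod_mul_distrib, prod_const, card_univ, hprodδ, hΔ,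
    sub_sub_cancel] at hcore
  have hP : 0 < ∏ i, (a + w i)⁻¹ := prod_pos fun i _ => inv_pos.mpr (haw i)
  have hpow : (g * (a * S)) ^ n ≤ ((n - a * S) * a) ^ n := by
    rw [mul_pow g (a * S), mul_pow ((n : ℝ) - a * S) a]
    refine le_of_mul_le_mul_right (le_of_eq_of_le ?_ (hcore.trans_eq ?_)) hP <;> ring
  have hS₀ : 0 ≤ S := sum_nonneg fun i _ => (inv_pos.mpr (haw i)).le
  have hg₀ : 0 ≤ g := Real.rpow_nonneg (prod_nonneg fun i _ => (hw i).le) _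
  have hlin : g * (a * S) ≤ (n - a * S) * a :=
    (pow_le_pow_iff_left₀ (by positivity) (mul_nonneg (hΔ ▸ hΔ₀.le) ha.le)
      Fintype.card_ne_zero).mp hpow
  have : g * S ≤ n - a * S := le_of_mul_le_mul_right (by linarith) ha
  linarith

theorem sum_inv_add_le_one {ι : Type*} [Fintype ι] {a : ℝ} {w : ι → ℝ} (ha : 0 < a)
    (hw : ∀ i, 0 < w i) (ha₁ : (Fintype.card ι : ℝ) - 1 ≤ a)
    (ha₂ : (Fintype.card ι : ℝ) - (∏ i, w i) ^ ((1 : ℝ) / Fintype.card ι) ≤ a) :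
    ∑ i, (a + w i)⁻¹ ≤ 1 := by
  rcases isEmpty_or_nonempty ι with _ | _
  · simp
  rcases le_or_gt (a * ∑ i, (a + w i)⁻¹) (Fintype.card ι - 1) with hS | hS
  · nlinarith
  · have hS₀ : 0 ≤ ∑ i, (a + w i)⁻¹ :=
      sum_nonneg fun i _ => (inv_pos.mpr (by linarith [hw i])).le
    have hn : (0 : ℝ) < Fintype.card ι := by exact_mod_cast Fintype.card_pos
    have hag : (Fintype.card ι : ℝ) ≤ a + (∏ i, w i) ^ ((1 : ℝ) / Fintype.card ι) := by
      linarith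
    have := (mul_le_mul_of_nonneg_right hag hS₀).trans (add_rpow_mul_sum_inv_add_le ha hw hS)
    exact le_of_mul_le_mul_left (by linarith) hn

theorem div_mul_add_le_inv {a r t : ℝ} (ha : 0 < a) (hr : 0 ≤ r) (ht : 0 ≤ t) :
    r / (a * r + t) ≤ a⁻¹ := by
  rcases hr.eq_or_lt with rfl | hr
  · simp [ha.le]
  · rw [div_le_iff₀ (by positivity)]
    field_simp
    linarith

theorem sum_div_mul_add_mul_perm_le_one {ι : Type*} [Fintype ι] {σ : Equiv.Perm ι} {a : ℝ}
    {c r : ι → ℝ} (ha : 0 < a) (hc : ∀ i, 0 < c i) (hr : ∀ i, 0 ≤ r i)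
    (ha₁ : (Fintype.card ι : ℝ) - 1 ≤ a)
    (ha₂ : (Fintype.card ι : ℝ) - (∏ i, c i) ^ ((1 : ℝ) / Fintype.card ι) ≤ a) :
    ∑ i, r i / (a * r i + c i * r (σ i)) ≤ 1 := by
  classical
  by_cases hpos : ∀ i, 0 < r i
  · set w : ι → ℝ := fun i => c i * r (σ i) / r i
    have hterm : ∀ i, r i / (a * r i + c i * r (σ i)) = (a + w i)⁻¹ := fun i => by
      have := (hpos i).ne'
      simp only [w]; field_simp
    have hprod : ∏ i, w i = ∏ i, c i := by
      simp only [w, prod_div_distrib, prod_mul_distrib, Equiv.prod_comp σ r]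
      exact mul_div_cancel_right₀ _ (prod_pos fun i _ => hpos i).ne'
    simp only [hterm]
    exact sum_inv_add_le_one ha (fun i => div_pos (mul_pos (hc i) (hpos (σ i))) (hpos i)) ha₁
      (hprod ▸ ha₂)
  obtain ⟨j, hj⟩ := not_forall.mp hpos
  rw [not_lt] at hj
  have hrj : r j = 0 := le_antisymm hj (hr j)
  rw [← add_sum_erase _ _ (mem_univ j), hrj, zero_div, zero_add]
  calc ∑ i ∈ univ.erase j, r i / (a * r i + c i * r (σ i))
      ≤ (univ.erase j).card • a⁻¹ :=
        sum_le_card_nsmul _ _ _ fun i _ =>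
          div_mul_add_le_inv ha (hr i) (mul_nonneg (hc i).le (hr _))
    _ = (Fintype.card ι - 1) * a⁻¹ := by
        rw [card_erase_of_mem (mem_univ j), card_univ, nsmul_eq_mul,
          Nat.cast_sub (Fintype.card_pos_iff.mpr ⟨j⟩), Nat.cast_one]
    _ ≤ 1 := by rw [← div_eq_mul_inv, div_le_one ha]; exact ha₁

theorem posSemidef_diagonal_sub_vecMulVec {ι : Type*} [Fintype ι] [DecidableEq ι]
    {d : ι → ℝ} {b : ι → ℂ} (hd : ∀ i, 0 ≤ d i) (hb : ∀ i, d i = 0 → b i = 0)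
    (h : ∑ i, ‖b i‖ ^ 2 / d i ≤ 1) :
    (diagonal (fun i => (d i : ℂ)) - vecMulVec b (star b)).PosSemidef := by
  rw [posSemidef_iff_dotProduct_mulVec]
  refine ⟨(isHermitian_diagonal_of_self_adjoint _ ?_).sub
    (posSemidef_vecMulVec_self_star b).isHermitian, fun v => ?_⟩
  · ext i; simp
  have hquad : star v ⬝ᵥ ((diagonal (fun i => (d i : ℂ)) - vecMulVec b (star b)) *ᵥ v) =
      ((∑ i, d i * ‖v i‖ ^ 2 - ‖star b ⬝ᵥ v‖ ^ 2 : ℝ) : ℂ) := by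
    rw [sub_mulVec, dotProduct_sub, vecMulVec_mulVec, dotProduct_smul, op_smul_eq_mul]
    have h1 : star v ⬝ᵥ (diagonal (fun i => (d i : ℂ)) *ᵥ v) =
        ((∑ i, d i * ‖v i‖ ^ 2 : ℝ) : ℂ) := by
      simp [dotProduct, mulVec_diagonal, mul_left_comm _ (d _ : ℂ), RCLike.star_def,
        RCLike.conj_mul]
    have h2 : (star v ⬝ᵥ b) * (star b ⬝ᵥ v) = (‖star b ⬝ᵥ v‖ : ℂ) ^ 2 := by
      rw [star_dotProduct]
      exact RCLike.conj_mul _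
    rw [h1, h2]; push_cast; ring
  have hnorm : ‖star b ⬝ᵥ v‖ ≤ ∑ i, ‖b i‖ * ‖v i‖ :=
    (norm_sum_le _ _).trans_eq (sum_congr rfl fun i _ => by simp)
  have hcs : (∑ i, ‖b i‖ * ‖v i‖) ^ 2 ≤ (∑ i, d i * ‖v i‖ ^ 2) * ∑ i, ‖b i‖ ^ 2 / d i := by
    refine sum_sq_le_sum_mul_sum_of_sq_le_mul _ (fun i _ => by positivity [hd i])
      (fun i _ => by positivity [hd i]) fun i _ => le_of_eq ?_
    rcases (hd i).eq_or_lt with hdi | hdi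
    · simp [hb i hdi.symm]
    · field_simp
  rw [hquad, Complex.zero_le_real, sub_nonneg]
  calc ‖star b ⬝ᵥ v‖ ^ 2 ≤ (∑ i, ‖b i‖ * ‖v i‖) ^ 2 := by gcongr
    _ ≤ (∑ i, d i * ‖v i‖ ^ 2) * ∑ i, ‖b i‖ ^ 2 / d i := hcs
    _ ≤ ∑ i, d i * ‖v i‖ ^ 2 :=
        mul_le_of_le_one_right (sum_nonneg fun i _ => by positivity [hd i]) h

theorem thetaMap_add {n : ℕ} (σ : Equiv.Perm (Fin n)) (a : ℝ) (c : Fin n → ℝ)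
    (X Y : Matrix (Fin n) (Fin n) ℂ) :
    ThetaMap n σ a c (X + Y) = ThetaMap n σ a c X + ThetaMap n σ a c Y := by
  simp only [ThetaMap, Matrix.add_apply, mul_add, ← diagonal_add]
  abel

theorem thetaMap_sum {n : ℕ} (σ : Equiv.Perm (Fin n)) (a : ℝ) (c : Fin n → ℝ) {κ : Type*}
    (s : Finset κ) (X : κ → Matrix (Fin n) (Fin n) ℂ) :
    ThetaMap n σ a c (∑ k ∈ s, X k) = ∑ k ∈ s, ThetaMap n σ a c (X k) :=
  map_sum (AddMonoidHom.mk' (ThetaMap n σ a c) (thetaMap_add σ a c)) X s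

theorem thetaMap_vecMulVec {n : ℕ} (σ : Equiv.Perm (Fin n)) (a : ℝ) (c : Fin n → ℝ)
    (b : Fin n → ℂ) :
    ThetaMap n σ a c (vecMulVec b (star b)) =
      diagonal (fun i => ((a * ‖b i‖ ^ 2 + c i * ‖b (σ i)‖ ^ 2 : ℝ) : ℂ)) -
        vecMulVec b (star b) := by
  simp [ThetaMap, vecMulVec_apply, RCLike.mul_conj]

theorem posSemidef_thetaMap_vecMulVec {n : ℕ} {σ : Equiv.Perm (Fin n)} {a : ℝ}
    {c : Fin n → ℝ} (ha : 0 < a) (hc : ∀ i, 0 < c i) (ha₁ : (n : ℝ) - 1 ≤ a)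
    (ha₂ : (n : ℝ) - (∏ i, c i) ^ ((1 : ℝ) / n) ≤ a) (b : Fin n → ℂ) :
    (ThetaMap n σ a c (vecMulVec b (star b))).PosSemidef := by
  rw [thetaMap_vecMulVec]
  refine posSemidef_diagonal_sub_vecMulVec
    (d := fun i => a * ‖b i‖ ^ 2 + c i * ‖b (σ i)‖ ^ 2) (fun i => by positivity [ha, hc i])
    (fun i hi => ?_) ?_
  · have hbi : a * ‖b i‖ ^ 2 = 0 :=
      ((add_eq_zero_iff_of_nonneg (by positivity [ha]) (by positivity [hc i])).mp hi).1
    simpa [ha.ne'] using hbi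
  · exact sum_div_mul_add_mul_perm_le_one ha hc (fun i => by positivity)
      (by rwa [Fintype.card_fin]) (by rwa [Fintype.card_fin])

theorem stmt8_general (n : ℕ) (σ : Equiv.Perm (Fin n)) (a : ℝ) (c : Fin n → ℝ)
    (ha0 : 0 < a) (hc : ∀ i, 0 < c i)
    (ha : max ((n : ℝ) - 1) ((n : ℝ) - (∏ i, c i) ^ ((1 : ℝ) / n)) ≤ a) :
    ∀ X : Matrix (Fin n) (Fin n) ℂ, X.PosSemidef → (ThetaMap n σ a c X).PosSemidef := by
  intro X hX
  obtain ⟨m, b, rfl⟩ := posSemidef_iff_eq_sum_vecMulVec.mp hX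
  rw [thetaMap_sum]
  exact posSemidef_sum _ fun k _ =>
    posSemidef_thetaMap_vecMulVec ha0 hc (max_le_iff.mp ha).1 (max_le_iff.mp ha).2 (b k)

theorem stmt8 (n : ℕ) (hn : 0 < n) (σ : Equiv.Perm (Fin n)) (a : ℝ) (c : Fin n → ℝ)
    (ha0 : 0 < a) (hc : ∀ i, 0 < c i)
    (ha : max ((n : ℝ) - 1) ((n : ℝ) - (∏ i, c i) ^ ((1 : ℝ) / n)) ≤ a) :
    ∀ X : Matrix (Fin n) (Fin n) ℂ, X.PosSemidef → (ThetaMap n σ a c X).PosSemidef :=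
  stmt8_general n σ a c ha0 hc ha
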